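/- Under the same hypotheses (a_n ≍ e^{-αn}, b_n ≍ e^{-βn}, 0 < β < α), there exist positive constants C₁, C₂ independent of η such that for all sufficiently small η > 0: C₁ η^{β/α - 2} ≤ Σ_{n=1}^∞ b_n/(a_n + η)² ≤ C₂ η^{β/α - 2}. -/

import Mathlib

/-!
With `p = exp (-α)`, `q = exp (-β)` and `r = q / p ^ 2 > 1`, choose `n` with
`p ^ (n + 1) < η ≤ p ^ n`; then `η ^ (β / α - 2)` is comparable to `r ^ n`. From below, the single
term of index `n` is `≳ q ^ n / (p ^ n) ^ 2 = r ^ n`, since `a n + η ≲ p ^ n`. From above, the terms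
of index `k < N` are at most `b k / a k ^ 2 ≲ r ^ k`, a geometric sum `≲ r ^ N`, and the others are
at most `b k / η ^ 2 ≲ q ^ k / p ^ (2 N)` once `p ^ N ≤ η`, a geometric tail `≲ r ^ N`.
-/

open Real Finset

lemma div_sq_le_div_sq {x y B c : ℝ} (hy : 0 ≤ y) (hyB : y ≤ B) (hc : 0 < c) (hcx : c ≤ x) :
    y / x ^ 2 ≤ B / c ^ 2 :=
  div_le_div₀ (hy.trans hyB) hyB (by positivity) (pow_le_pow_left₀ hc.le hcx 2)

lemma geom_sum_le_pow_div_sub_one {r : ℝ} (hr : 1 < r) (N : ℕ) :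
    ∑ i ∈ range N, r ^ i ≤ r ^ N / (r - 1) := by
  rw [geom_sum_eq hr.ne']
  exact div_le_div_of_nonneg_right (sub_le_self _ zero_le_one) (sub_pos.2 hr).le

lemma rpow_mem_Icc_of_pow_lt_le {p η γ : ℝ} {n : ℕ} (hp : 0 < p) (hγ : γ ≤ 0)
    (hlo : p ^ (n + 1) < η) (hhi : η ≤ p ^ n) :
    (p ^ γ) ^ n ≤ η ^ γ ∧ η ^ γ ≤ (p ^ γ) ^ (n + 1) := by
  rw [rpow_pow_comm hp.le, rpow_pow_comm hp.le]
  exact ⟨rpow_le_rpow_of_nonpos ((pow_pos hp _).trans hlo) hhi hγ,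
    rpow_le_rpow_of_nonpos (pow_pos hp _) hlo.le hγ⟩

section

variable {a b : ℕ → ℝ} {p q c₁ c₂ d₁ d₂ η : ℝ}

lemma summable_div_sq_add (ha0 : ∀ n, 0 ≤ a n) (hb0 : ∀ n, 0 ≤ b n)
    (hb : ∀ n, b n ≤ d₂ * q ^ n) (hq0 : 0 ≤ q) (hq : q < 1) (hη : 0 < η) :
    Summable fun n ↦ b n / (a n + η) ^ 2 := by
  refine .of_nonneg_of_le (fun n ↦ by have := hb0 n; positivity) (fun n ↦ ?_)
    ((summable_geometric_of_lt_one hq0 hq).mul_left (d₂ / η ^ 2))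
  calc b n / (a n + η) ^ 2 ≤ d₂ * q ^ n / η ^ 2 :=
        div_sq_le_div_sq (hb0 n) (hb n) hη (le_add_of_nonneg_left (ha0 n))
    _ = d₂ / η ^ 2 * q ^ n := by ring

lemma mul_pow_le_tsum_div_sq_add (hp : 0 < p) (hq : 0 ≤ q) (hd₁ : 0 ≤ d₁) (hc₂ : 0 ≤ c₂)
    (ha0 : ∀ n, 0 ≤ a n) (hb0 : ∀ n, 0 ≤ b n)
    (ha : ∀ n, a n ≤ c₂ * p ^ n) (hb : ∀ n, d₁ * q ^ n ≤ b n)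
    (hf : Summable fun n ↦ b n / (a n + η) ^ 2) (hη : 0 < η) {N : ℕ} (hηN : η ≤ p ^ N) :
    d₁ / (c₂ + 1) ^ 2 * (q / p ^ 2) ^ N ≤ ∑' n, b n / (a n + η) ^ 2 := by
  calc d₁ / (c₂ + 1) ^ 2 * (q / p ^ 2) ^ N = d₁ * q ^ N / ((c₂ + 1) * p ^ N) ^ 2 := by
        rw [div_pow, pow_right_comm]; field_simp
    _ ≤ b N / (a N + η) ^ 2 :=
        div_sq_le_div_sq (by positivity) (hb N) (by linarith [ha0 N]) (by linarith [ha N])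
    _ ≤ ∑' n, b n / (a n + η) ^ 2 :=
        hf.le_tsum N fun n _ ↦ by have := hb0 n; positivity

lemma tsum_div_sq_add_le_mul_pow (hp : 0 < p) (hpq : p ^ 2 < q) (hq : q < 1) (hc₁ : 0 < c₁)
    (ha0 : ∀ n, 0 ≤ a n) (hb0 : ∀ n, 0 ≤ b n)
    (ha : ∀ n, c₁ * p ^ n ≤ a n) (hb : ∀ n, b n ≤ d₂ * q ^ n)
    {N : ℕ} (hηN : p ^ N ≤ η) :
    ∑' n, b n / (a n + η) ^ 2
      ≤ d₂ * (1 / (c₁ ^ 2 * (q / p ^ 2 - 1)) + 1 / (1 - q)) * (q / p ^ 2) ^ N := by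
  set r := q / p ^ 2 with hr
  have hr1 : 1 < r := by rwa [hr, one_lt_div (by positivity)]
  have hq0 : 0 < q := (pow_pos hp 2).trans hpq
  have hη : 0 < η := (pow_pos hp N).trans_le hηN
  have hd₂ : 0 ≤ d₂ := by simpa using (hb0 0).trans (hb 0)
  have hf := summable_div_sq_add ha0 hb0 hb hq0.le hq hη
  have head : ∑ i ∈ range N, b i / (a i + η) ^ 2 ≤ d₂ / (c₁ ^ 2 * (r - 1)) * r ^ N := by
    calc ∑ i ∈ range N, b i / (a i + η) ^ 2 ≤ ∑ i ∈ range N, d₂ / c₁ ^ 2 * r ^ i := by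
          refine sum_le_sum fun i _ ↦ ?_
          calc b i / (a i + η) ^ 2 ≤ d₂ * q ^ i / (c₁ * p ^ i) ^ 2 :=
                div_sq_le_div_sq (hb0 i) (hb i) (by positivity) (by linarith [ha i])
            _ = d₂ / c₁ ^ 2 * r ^ i := by rw [hr, div_pow, pow_right_comm]; field_simp
      _ = d₂ / c₁ ^ 2 * ∑ i ∈ range N, r ^ i := (mul_sum ..).symm
      _ ≤ d₂ / c₁ ^ 2 * (r ^ N / (r - 1)) := by
          gcongr
          exact geom_sum_le_pow_div_sub_one hr1 N
      _ = d₂ / (c₁ ^ 2 * (r - 1)) * r ^ N := by field_simp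
  have tail : ∑' i, b (i + N) / (a (i + N) + η) ^ 2 ≤ d₂ / (1 - q) * r ^ N := by
    have hle : ∀ i, b (i + N) / (a (i + N) + η) ^ 2 ≤ d₂ * r ^ N * q ^ i := fun i ↦ by
      calc b (i + N) / (a (i + N) + η) ^ 2 ≤ d₂ * q ^ (i + N) / (p ^ N) ^ 2 :=
            div_sq_le_div_sq (hb0 _) (hb _) (by positivity) (by linarith [ha0 (i + N)])
        _ = d₂ * r ^ N * q ^ i := by rw [hr, div_pow, pow_right_comm, pow_add]; field_simp
    calc ∑' i, b (i + N) / (a (i + N) + η) ^ 2 ≤ ∑' i, d₂ * r ^ N * q ^ i :=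
          Summable.tsum_le_tsum hle ((summable_nat_add_iff N).2 hf)
            ((summable_geometric_of_lt_one hq0.le hq).mul_left _)
      _ = d₂ / (1 - q) * r ^ N := by
          rw [tsum_mul_left, tsum_geometric_of_lt_one hq0.le hq]; ring
  calc ∑' n, b n / (a n + η) ^ 2
      = ∑ i ∈ range N, b i / (a i + η) ^ 2 + ∑' i, b (i + N) / (a (i + N) + η) ^ 2 :=
        (hf.sum_add_tsum_nat_add N).symm
    _ ≤ d₂ / (c₁ ^ 2 * (r - 1)) * r ^ N + d₂ / (1 - q) * r ^ N := add_le_add head tail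
    _ = d₂ * (1 / (c₁ ^ 2 * (r - 1)) + 1 / (1 - q)) * r ^ N := by ring

lemma exists_bounds_tsum_div_sq_add (hp : 0 < p) (hp1 : p < 1) (hpq : p ^ 2 < q) (hq1 : q < 1)
    {γ : ℝ} (hγ : γ ≤ 0) (hpγ : p ^ γ = q / p ^ 2)
    (hc₁ : 0 < c₁) (hc₂ : 0 < c₂) (hd₁ : 0 < d₁) (hd₂ : 0 < d₂)
    (ha0 : ∀ n, 0 ≤ a n) (hb0 : ∀ n, 0 ≤ b n)
    (ha : ∀ n, c₁ * p ^ n ≤ a n ∧ a n ≤ c₂ * p ^ n)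
    (hb : ∀ n, d₁ * q ^ n ≤ b n ∧ b n ≤ d₂ * q ^ n) :
    ∃ C₁ C₂ : ℝ, 0 < C₁ ∧ 0 < C₂ ∧ ∀ η : ℝ, 0 < η → η < 1 →
      C₁ * η ^ γ ≤ ∑' n, b n / (a n + η) ^ 2 ∧ ∑' n, b n / (a n + η) ^ 2 ≤ C₂ * η ^ γ := by
  set r := q / p ^ 2
  have hq : 0 < q := (pow_pos hp 2).trans hpq
  have hr1 : 1 < r := (one_lt_div (by positivity)).2 hpq
  set L := d₁ / (c₂ + 1) ^ 2
  set U := d₂ * (1 / (c₁ ^ 2 * (r - 1)) + 1 / (1 - q))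
  refine ⟨L / r, U * r, by positivity, by positivity, fun η hη hη1 ↦ ?_⟩
  -- `η` lies between consecutive terms of `p ^ n`, and `η ^ γ` is then comparable to `r ^ n`
  obtain ⟨n, hlo, hhi⟩ := exists_nat_pow_near_of_lt_one hη hη1.le hp hp1
  obtain ⟨hγlo, hγhi⟩ := rpow_mem_Icc_of_pow_lt_le hp hγ hlo hhi
  rw [hpγ] at hγlo hγhi
  have hf := summable_div_sq_add ha0 hb0 (fun n ↦ (hb n).2) hq.le hq1 hη
  constructor
  · calc L / r * η ^ γ ≤ L / r * r ^ (n + 1) := by gcongr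
      _ = L * r ^ n := by rw [pow_succ]; field_simp
      _ ≤ _ := mul_pow_le_tsum_div_sq_add hp hq.le hd₁.le hc₂.le ha0 hb0
          (fun n ↦ (ha n).2) (fun n ↦ (hb n).1) hf hη hhi
  · calc _ ≤ U * r ^ (n + 1) := tsum_div_sq_add_le_mul_pow hp hpq hq1 hc₁ ha0 hb0
          (fun n ↦ (ha n).1) (fun n ↦ (hb n).2) hlo.le
      _ = U * r * r ^ n := by ring
      _ ≤ U * r * η ^ γ := by gcongr

end


lemma exp_neg_mul_natCast_succ (α : ℝ) (n : ℕ) :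
    exp (-α * ↑(n + 1)) = exp (-α) * exp (-α) ^ n := by
  rw [mul_comm, exp_nat_mul, pow_succ']

lemma exp_neg_rpow_div_sub_two {α : ℝ} (hα : α ≠ 0) (β : ℝ) :
    exp (-α) ^ (β / α - 2) = exp (-β) / exp (-α) ^ 2 := by
  rw [← exp_mul, ← exp_nat_mul, ← exp_sub]
  congr 1
  field_simp
  push_cast
  ring

/-- power-law asymptotics of `∑_{n=1}^∞ b_n / (a_n + η)²` when
`a_n ≍ e^{-αn}` and `b_n ≍ e^{-βn}` with `0 < β < α`. -/
theorem stmt1 (a b : ℕ → ℝ) (α β : ℝ) (hβ : 0 < β) (hβα : β < α)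
    (ha0 : ∀ n : ℕ, 0 ≤ a n) (hb0 : ∀ n : ℕ, 0 ≤ b n)
    (c₁ c₂ d₁ d₂ : ℝ) (hc₁ : 0 < c₁) (hc₂ : 0 < c₂) (hd₁ : 0 < d₁) (hd₂ : 0 < d₂)
    (ha : ∀ n : ℕ, 1 ≤ n → c₁ * Real.exp (-α * n) ≤ a n ∧ a n ≤ c₂ * Real.exp (-α * n))
    (hb : ∀ n : ℕ, 1 ≤ n → d₁ * Real.exp (-β * n) ≤ b n ∧ b n ≤ d₂ * Real.exp (-β * n)) :
    ∃ C₁ C₂ η₀ : ℝ, 0 < C₁ ∧ 0 < C₂ ∧ 0 < η₀ ∧ ∀ η : ℝ, 0 < η → η < η₀ →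
      C₁ * η ^ (β / α - 2) ≤ (∑' n : ℕ, b (n + 1) / (a (n + 1) + η) ^ 2) ∧
      (∑' n : ℕ, b (n + 1) / (a (n + 1) + η) ^ 2) ≤ C₂ * η ^ (β / α - 2) := by
  have hα : 0 < α := hβ.trans hβα
  have hγ : β / α - 2 ≤ 0 := by linarith [(div_lt_one hα).2 hβα]
  have hp1 : exp (-α) < 1 := exp_lt_one_iff.2 (by linarith)
  have hq1 : exp (-β) < 1 := exp_lt_one_iff.2 (by linarith)
  have hpq : exp (-α) ^ 2 < exp (-β) := by
    rw [← exp_nat_mul]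
    exact exp_lt_exp.2 (by push_cast; linarith)
  have ha' (n : ℕ) : c₁ * exp (-α) * exp (-α) ^ n ≤ a (n + 1) ∧
      a (n + 1) ≤ c₂ * exp (-α) * exp (-α) ^ n := by
    simpa only [exp_neg_mul_natCast_succ, mul_assoc] using ha (n + 1) n.succ_pos
  have hb' (n : ℕ) : d₁ * exp (-β) * exp (-β) ^ n ≤ b (n + 1) ∧
      b (n + 1) ≤ d₂ * exp (-β) * exp (-β) ^ n := by
    simpa only [exp_neg_mul_natCast_succ, mul_assoc] using hb (n + 1) n.succ_pos
  obtain ⟨C₁, C₂, hC₁, hC₂, hbounds⟩ := exists_bounds_tsum_div_sq_add (exp_pos _) hp1 hpq hq1 hγ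
    (exp_neg_rpow_div_sub_two hα.ne' β) (by positivity) (by positivity) (by positivity)
    (by positivity) (fun n ↦ ha0 (n + 1)) (fun n ↦ hb0 (n + 1)) ha' hb'
  exact ⟨C₁, C₂, 1, hC₁, hC₂, one_pos, hbounds⟩
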